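/- Let H be a group and F ⊆ H a finite nonempty subset. The function φ : H → ℝ defined by φ(h) = |hF ∩ F|/|F| is positive definite: for any finitely many h_1,…,h_m ∈ H and complex numbers c_1,…,c_m, the sum Σ_{i,j} c_i conj(c_j) φ(h_j⁻¹ h_i) is a nonnegative real number. -/
import Mathlib


open ComplexOrder

theorem stmt_3 {H : Type*} [Group H] [DecidableEq H]
    (F : Finset H) (hF : F.Nonempty)
    (φ : H → ℝ)
    (hφ : ∀ h, φ h = ((F.image (fun f => h * f) ∩ F).card : ℝ) / F.card)
    (m : ℕ) (h : Fin m → H) (c : Fin m → ℂ) :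
    0 ≤ ∑ i, ∑ j, c i * (starRingEnd ℂ) (c j) * (φ ((h j)⁻¹ * h i) : ℂ) := by
  classical
  set A : Fin m → Finset H := fun i => F.image (fun f => h i * f) with hA
  have hcard : ∀ i j, (F.image (fun f => (h j)⁻¹ * h i * f) ∩ F).card
      = (A i ∩ A j).card := by
    intro i j
    have he : A i ∩ A j = (F.image (fun f => (h j)⁻¹ * h i * f) ∩ F).image
        (fun x => h j * x) := by
      rw [Finset.image_inter _ _ (mul_right_injective (h j)), Finset.image_image]
      have h2 : ((fun x => h j * x) ∘ fun f => (h j)⁻¹ * h i * f) = fun f => h i * f := by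
        funext x; simp [mul_assoc]
      rw [h2]
    rw [he, Finset.card_image_of_injective _ (mul_right_injective (h j))]
  set S : Finset H := Finset.univ.biUnion A with hS
  have hsub : ∀ i j : Fin m, A i ∩ A j ⊆ S := fun i j =>
    Finset.inter_subset_left.trans (Finset.subset_biUnion_of_mem A (Finset.mem_univ i))
  set g : H → ℂ := fun x => ∑ i, if x ∈ A i then c i else 0 with hg
  have key : ∑ i, ∑ j, c i * (starRingEnd ℂ) (c j) * (((A i ∩ A j).card : ℝ) : ℂ)
      = ∑ x ∈ S, g x * (starRingEnd ℂ) (g x) := by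
    have : ∀ x, g x * (starRingEnd ℂ) (g x)
        = ∑ i, ∑ j, (if x ∈ A i then c i else 0) * (starRingEnd ℂ)
            (if x ∈ A j then c j else 0) := by
      intro x
      rw [hg, map_sum, Finset.sum_mul_sum]
    simp_rw [this]
    symm
    rw [Finset.sum_comm]
    refine Finset.sum_congr rfl fun i _ => ?_
    rw [Finset.sum_comm]
    refine Finset.sum_congr rfl fun j _ => ?_
    have : ∀ x : H, (if x ∈ A i then c i else 0) * (starRingEnd ℂ)
          (if x ∈ A j then c j else 0)
          = if x ∈ A i ∩ A j then c i * (starRingEnd ℂ) (c j) else 0 := by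
        intro x
        by_cases h1 : x ∈ A i <;> by_cases h2 : x ∈ A j <;>
          simp [h1, h2, Finset.mem_inter]
    simp_rw [this]
    rw [Finset.sum_ite_mem, Finset.inter_eq_right.mpr (hsub i j),
      Finset.sum_const, nsmul_eq_mul]
    push_cast
    ring
  have hsum0 : 0 ≤ ∑ x ∈ S, g x * (starRingEnd ℂ) (g x) := by
    refine Finset.sum_nonneg fun x _ => ?_
    rw [Complex.mul_conj]
    exact_mod_cast Complex.normSq_nonneg (g x)
  have hrw : ∑ i, ∑ j, c i * (starRingEnd ℂ) (c j) * (φ ((h j)⁻¹ * h i) : ℂ)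
      = ((F.card : ℝ)⁻¹ : ℂ) *
        ∑ i, ∑ j, c i * (starRingEnd ℂ) (c j) * (((A i ∩ A j).card : ℝ) : ℂ) := by
    rw [Finset.mul_sum]
    refine Finset.sum_congr rfl fun i _ => ?_
    rw [Finset.mul_sum]
    refine Finset.sum_congr rfl fun j _ => ?_
    rw [hφ, hcard i j]
    push_cast
    ring
  rw [hrw, key]
  refine mul_nonneg ?_ hsum0
  rw [← Complex.ofReal_inv]
  exact_mod_cast inv_nonneg.mpr (Nat.cast_nonneg F.card)
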